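/- arXiv:1301.1378 — 4 statements merged into one kernel-verified Lean document; each statement's English description precedes it below -/
import Mathlib

section
/- Given three similitude contractions T_k(z) = p_k + φ_k(z - p_k), k = 1,2,3, with |φ_k| ∈ (0,1), set α_k = (1 - |φ_k|)/|1 - φ_k| and C = 2 (p_2 - p_1) × (p_2 - p_3) (cross product of complex numbers). If the three circumcircle conditions |p_k - c|² = α_k² r² (k=1,2,3) admit a solution (c,r) ∈ ℂ × ℝ_+, and additionally A := (α_3²-α_2²)p_1 + (α_1²-α_3²)p_2 + (α_2²-α_1²)p_3 = 0, then C ≠ 0 implies c = B/(Ci) with B := (|p_2|²-|p_3|²)p_1 + (|p_3|²-|p_1|²)p_2 + (|p_1|²-|p_2|²)p_3, and r = |c - p_1|/α_1. -/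
/-! Subtracting the three circumcircle conditions pairwise removes `‖c‖²` and leaves equations
linear in `c`; their combination with the points as coefficients is `B - C i c = -r² A`. So when
`A = 0` and the triangle is non-degenerate (`C ≠ 0`), the centre is `B / (C i)`, and the first
condition then gives the radius. -/

/-- Cross product of two complex numbers. -/
def ccross (z₁ z₂ : ℂ) : ℝ := z₁.re * z₂.im - z₁.im * z₂.re

/-- The paper's `B` is this sum with weights `‖pₖ‖²`, and its `A` is minus this sum with weights
`αₖ²`. -/
def cyclicDiffSum (a₁ a₂ a₃ : ℝ) (p₁ p₂ p₃ : ℂ) : ℂ :=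
  (a₂ - a₃ : ℝ) * p₁ + (a₃ - a₁ : ℝ) * p₂ + (a₁ - a₂ : ℝ) * p₃

lemma cyclicDiffSum_norm_sub_sq (p₁ p₂ p₃ c : ℂ) :
    cyclicDiffSum (‖p₁ - c‖ ^ 2) (‖p₂ - c‖ ^ 2) (‖p₃ - c‖ ^ 2) p₁ p₂ p₃ =
      cyclicDiffSum (‖p₁‖ ^ 2) (‖p₂‖ ^ 2) (‖p₃‖ ^ 2) p₁ p₂ p₃
        - (2 * ccross (p₂ - p₁) (p₂ - p₃) : ℝ) * Complex.I * c := by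
  simp only [cyclicDiffSum, ccross, Complex.sq_norm, Complex.normSq_apply]
  apply Complex.ext <;>
    simp only [Complex.add_re, Complex.add_im, Complex.sub_re, Complex.sub_im, Complex.mul_re,
      Complex.mul_im, Complex.ofReal_re, Complex.ofReal_im, Complex.I_re, Complex.I_im] <;> ring

lemma cyclicDiffSum_mul_right (a₁ a₂ a₃ s : ℝ) (p₁ p₂ p₃ : ℂ) :
    cyclicDiffSum (a₁ * s) (a₂ * s) (a₃ * s) p₁ p₂ p₃ = s * cyclicDiffSum a₁ a₂ a₃ p₁ p₂ p₃ := by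
  simp only [cyclicDiffSum]; push_cast; ring

lemma eq_div_of_cyclicDiffSum_eq_zero {p₁ p₂ p₃ c : ℂ} {a₁ a₂ a₃ s : ℝ}
    (h₁ : ‖p₁ - c‖ ^ 2 = a₁ * s) (h₂ : ‖p₂ - c‖ ^ 2 = a₂ * s) (h₃ : ‖p₃ - c‖ ^ 2 = a₃ * s)
    (ha : cyclicDiffSum a₁ a₂ a₃ p₁ p₂ p₃ = 0) (hC : ccross (p₂ - p₁) (p₂ - p₃) ≠ 0) :
    c = cyclicDiffSum (‖p₁‖ ^ 2) (‖p₂‖ ^ 2) (‖p₃‖ ^ 2) p₁ p₂ p₃ /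
      ((2 * ccross (p₂ - p₁) (p₂ - p₃) : ℝ) * Complex.I) := by
  have hB := cyclicDiffSum_norm_sub_sq p₁ p₂ p₃ c
  rw [h₁, h₂, h₃, cyclicDiffSum_mul_right, ha, mul_zero, eq_comm, sub_eq_zero] at hB
  rw [hB, mul_div_cancel_left₀]
  exact mul_ne_zero (by exact_mod_cast mul_ne_zero two_ne_zero hC) Complex.I_ne_zero

lemma contraction_ratio_pos {φ : ℂ} (hφ : ‖φ‖ < 1) : 0 < (1 - ‖φ‖) / ‖1 - φ‖ := by
  have hφ1 : φ ≠ 1 := by rintro rfl; simp at hφ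
  exact div_pos (by linarith) (norm_pos_iff.2 (sub_ne_zero.2 hφ1.symm))

lemma eq_norm_div_of_norm_sq_eq {p c : ℂ} {α r : ℝ} (hα : 0 < α) (hr : 0 < r)
    (h : ‖p - c‖ ^ 2 = α ^ 2 * r ^ 2) : r = ‖c - p‖ / α := by
  have hnorm : ‖c - p‖ = α * r := by
    rw [norm_sub_rev]
    rw [← mul_pow] at h
    exact (pow_left_inj₀ (norm_nonneg _) (by positivity) two_ne_zero).1 h
  rw [hnorm, mul_div_cancel_left₀ r hα.ne']

theorem stmt11_general (p₁ p₂ p₃ φ₁ : ℂ)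
    (h₁ : ‖φ₁‖ ∈ Set.Ioo (0:ℝ) 1)
    (α₁ α₂ α₃ : ℝ)
    (hα₁ : α₁ = (1 - ‖φ₁‖) / ‖1 - φ₁‖)
    (A B : ℂ) (C : ℝ)
    (hA : A = (α₃^2 - α₂^2) * p₁ + (α₁^2 - α₃^2) * p₂ + (α₂^2 - α₁^2) * p₃)
    (hB : B = ((‖p₂‖)^2 - (‖p₃‖)^2) * p₁
            + ((‖p₃‖)^2 - (‖p₁‖)^2) * p₂
            + ((‖p₁‖)^2 - (‖p₂‖)^2) * p₃)
    (hC : C = 2 * ccross (p₂ - p₁) (p₂ - p₃))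
    (c : ℂ) (r : ℝ) (hr : 0 < r)
    (hcond₁ : ‖p₁ - c‖ ^ 2 = α₁^2 * r^2)
    (hcond₂ : ‖p₂ - c‖ ^ 2 = α₂^2 * r^2)
    (hcond₃ : ‖p₃ - c‖ ^ 2 = α₃^2 * r^2)
    (hA0 : A = 0) (hC0 : C ≠ 0) :
    c = B / ((C : ℂ) * Complex.I) ∧ r = ‖c - p₁‖ / α₁ := by
  have hα : cyclicDiffSum (α₁ ^ 2) (α₂ ^ 2) (α₃ ^ 2) p₁ p₂ p₃ = 0 := by
    rw [← neg_eq_zero, ← hA0, hA, cyclicDiffSum]; push_cast; ring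
  have hB' : B = cyclicDiffSum (‖p₁‖ ^ 2) (‖p₂‖ ^ 2) (‖p₃‖ ^ 2) p₁ p₂ p₃ := by
    rw [hB, cyclicDiffSum]; push_cast; ring
  subst hC
  refine ⟨hB' ▸ eq_div_of_cyclicDiffSum_eq_zero hcond₁ hcond₂ hcond₃ hα ?_, ?_⟩
  · exact right_ne_zero_of_mul hC0
  · exact eq_norm_div_of_norm_sq_eq (hα₁ ▸ contraction_ratio_pos h₁.2) hr hcond₁

/-- the degenerate case A = 0 of the trifractal circumcircle:
if the three circumcircle conditions hold, A = 0 and C ≠ 0, then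
c = B/(Ci) and r = |c - p₁|/α₁. -/
theorem stmt11 (p₁ p₂ p₃ φ₁ φ₂ φ₃ : ℂ)
    (h₁ : ‖φ₁‖ ∈ Set.Ioo (0:ℝ) 1)
    (h₂ : ‖φ₂‖ ∈ Set.Ioo (0:ℝ) 1)
    (h₃ : ‖φ₃‖ ∈ Set.Ioo (0:ℝ) 1)
    (α₁ α₂ α₃ : ℝ)
    (hα₁ : α₁ = (1 - ‖φ₁‖) / ‖1 - φ₁‖)
    (hα₂ : α₂ = (1 - ‖φ₂‖) / ‖1 - φ₂‖)
    (hα₃ : α₃ = (1 - ‖φ₃‖) / ‖1 - φ₃‖)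
    (A B : ℂ) (C : ℝ)
    (hA : A = (α₃^2 - α₂^2) * p₁ + (α₁^2 - α₃^2) * p₂ + (α₂^2 - α₁^2) * p₃)
    (hB : B = ((‖p₂‖)^2 - (‖p₃‖)^2) * p₁
            + ((‖p₃‖)^2 - (‖p₁‖)^2) * p₂
            + ((‖p₁‖)^2 - (‖p₂‖)^2) * p₃)
    (hC : C = 2 * ccross (p₂ - p₁) (p₂ - p₃))
    (c : ℂ) (r : ℝ) (hr : 0 < r)
    (hcond₁ : ‖p₁ - c‖ ^ 2 = α₁^2 * r^2)
    (hcond₂ : ‖p₂ - c‖ ^ 2 = α₂^2 * r^2)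
    (hcond₃ : ‖p₃ - c‖ ^ 2 = α₃^2 * r^2)
    (hA0 : A = 0) (hC0 : C ≠ 0) :
    c = B / ((C : ℂ) * Complex.I) ∧ r = ‖c - p₁‖ / α₁ :=
  stmt11_general p₁ p₂ p₃ φ₁ h₁ α₁ α₂ α₃ hα₁ A B C hA hB hC c r hr hcond₁ hcond₂ hcond₃ hA0 hC0
end

section
/- Any solution (c, r) ∈ ℂ × ℝ_+ of the system |p_k - c|² = α_k² r² for k = 1,2,3 satisfies the linear relation A r² + B − C i · c = 0, where A = (α_3²-α_2²)p_1 + (α_1²-α_3²)p_2 + (α_2²-α_1²)p_3, B = (|p_2|²-|p_3|²)p_1 + (|p_3|²-|p_1|²)p_2 + (|p_1|²-|p_2|²)p_3, and C = 2(p_2-p_1)×(p_2-p_3). -/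
open Complex RealInnerProductSpace

theorem cyclic_sum_mul_inner_eq_ccross_mul_I_mul (p₁ p₂ p₃ c : ℂ) :
    (p₃ - p₂) * (⟪p₁, c⟫ : ℂ) + (p₁ - p₃) * (⟪p₂, c⟫ : ℂ) + (p₂ - p₁) * (⟪p₃, c⟫ : ℂ)
      = ccross (p₂ - p₁) (p₂ - p₃) * I * c := by
  apply Complex.ext <;>
  simp only [ccross, Complex.inner, add_re, add_im, sub_re, sub_im, mul_re, mul_im, conj_re,
    conj_im, ofReal_re, ofReal_im, ofReal_add, ofReal_sub, ofReal_mul, I_re, I_im, mul_neg,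
    sub_neg_eq_add, mul_zero, zero_mul, mul_one, add_zero, zero_add, sub_zero, zero_sub,
    sub_self] <;>
  ring

theorem ofReal_norm_sq_sub_two_inner_add {p c : ℂ} {a : ℝ} (h : ‖p - c‖ ^ 2 = a) :
    (‖p‖ ^ 2 - 2 * ⟪p, c⟫ + ‖c‖ ^ 2 : ℂ) = a := by
  exact_mod_cast (norm_sub_sq_real p c).symm.trans h

theorem stmt12_general (p₁ p₂ p₃ : ℂ) (α₁ α₂ α₃ : ℝ)
    (A B : ℂ) (C : ℝ)
    (hA : A = (α₃^2 - α₂^2) * p₁ + (α₁^2 - α₃^2) * p₂ + (α₂^2 - α₁^2) * p₃)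
    (hB : B = (‖p₂‖^2 - ‖p₃‖^2) * p₁
            + (‖p₃‖^2 - ‖p₁‖^2) * p₂
            + (‖p₁‖^2 - ‖p₂‖^2) * p₃)
    (hC : C = 2 * ccross (p₂ - p₁) (p₂ - p₃))
    (c : ℂ) (r : ℝ)
    (hcond₁ : ‖p₁ - c‖ ^ 2 = α₁^2 * r^2)
    (hcond₂ : ‖p₂ - c‖ ^ 2 = α₂^2 * r^2)
    (hcond₃ : ‖p₃ - c‖ ^ 2 = α₃^2 * r^2) :
    A * (r : ℂ)^2 + B - (C : ℂ) * Complex.I * c = 0 := by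
  subst hA hB hC
  linear_combination (norm := (push_cast; ring))
    (p₃ - p₂) * ofReal_norm_sq_sub_two_inner_add hcond₁
      + (p₁ - p₃) * ofReal_norm_sq_sub_two_inner_add hcond₂
      + (p₂ - p₁) * ofReal_norm_sq_sub_two_inner_add hcond₃
      + 2 * cyclic_sum_mul_inner_eq_ccross_mul_I_mul p₁ p₂ p₃ c

/-- any solution of the system |p_k - c|² = α_k² r² (k=1,2,3)
satisfies A r² + B - C i c = 0. -/
theorem stmt12 (p₁ p₂ p₃ : ℂ) (α₁ α₂ α₃ : ℝ)
    (A B : ℂ) (C : ℝ)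
    (hA : A = (α₃^2 - α₂^2) * p₁ + (α₁^2 - α₃^2) * p₂ + (α₂^2 - α₁^2) * p₃)
    (hB : B = (‖p₂‖^2 - ‖p₃‖^2) * p₁
            + (‖p₃‖^2 - ‖p₁‖^2) * p₂
            + (‖p₁‖^2 - ‖p₂‖^2) * p₃)
    (hC : C = 2 * ccross (p₂ - p₁) (p₂ - p₃))
    (c : ℂ) (r : ℝ) (hr : 0 < r)
    (hcond₁ : ‖p₁ - c‖ ^ 2 = α₁^2 * r^2)
    (hcond₂ : ‖p₂ - c‖ ^ 2 = α₂^2 * r^2)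
    (hcond₃ : ‖p₃ - c‖ ^ 2 = α₃^2 * r^2) :
    A * (r : ℂ)^2 + B - (C : ℂ) * Complex.I * c = 0 :=
  stmt12_general p₁ p₂ p₃ α₁ α₂ α₃ A B C hA hB hC c r hcond₁ hcond₂ hcond₃
end

section
/- With T_1, T_2, φ_1, φ_2, p_1, p_2, λ = (λ_1+λ_2)/2 and ν = (λ_2-λ_1)/(2(1-λ)) as given, assume the denominator (1-ν)(1-φ_1) + (1+ν)(1-φ_2) ≠ 0. Then c = ((1-ν)(1-φ_1)p_1 + (1+ν)(1-φ_2)p_2) / ((1-ν)(1-φ_1) + (1+ν)(1-φ_2)) together with r = |1-φ_1|·|1-φ_2|·|p_2-p_1| / ((1-λ)·|(1-ν)(1-φ_1) + (1+ν)(1-φ_2)|) is the unique fixed point of the map M from the bifractal circumcircle construction. -/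
/-!
On the locus `T₁ z ≠ T₂ z` the second fixed-point equation `m₂ z s = s` says exactly that
`‖T₂ z - T₁ z‖ = 2 (1 - λ) s`. Granting it, the drift term of `m₁` collapses to
`(ν / 2) (T₂ z - T₁ z)`, so `m₁ z s = z` becomes the linear equation
`(1 - ν) (T₁ z - z) + (1 + ν) (T₂ z - z) = 0`, whose unique solution is `c`. Then `r` is read off
from `‖T₂ c - T₁ c‖`.
-/

lemma ofReal_mul_mul_div_norm_of_norm_eq {d : ℂ} {s κ : ℝ} (a : ℝ) (hd : d ≠ 0)
    (hs : ‖d‖ = 2 * κ * s) :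
    (s : ℂ) * ((a : ℂ) / 2) * (d / (‖d‖ : ℂ)) = ((a / (2 * κ) : ℝ) : ℂ) / 2 * d := by
  have hκs : κ * s ≠ 0 := by
    intro h
    rw [mul_assoc, h, mul_zero, norm_eq_zero] at hs
    exact hd hs
  have hκ : (κ : ℂ) ≠ 0 := by exact_mod_cast left_ne_zero_of_mul hκs
  have hs' : (s : ℂ) ≠ 0 := by exact_mod_cast right_ne_zero_of_mul hκs
  rw [hs]
  push_cast
  field_simp

lemma add_div_two_add_mul_sub_eq_self_iff {p₁ p₂ φ₁ φ₂ ν z : ℂ} {T₁ T₂ : ℂ → ℂ}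
    (hT₁ : T₁ z = p₁ + φ₁ * (z - p₁)) (hT₂ : T₂ z = p₂ + φ₂ * (z - p₂)) :
    (T₁ z + T₂ z) / 2 + ν / 2 * (T₂ z - T₁ z) = z ↔
      ((1 - ν) * (1 - φ₁) + (1 + ν) * (1 - φ₂)) * z =
        (1 - ν) * (1 - φ₁) * p₁ + (1 + ν) * (1 - φ₂) * p₂ := by
  rw [hT₁, hT₂]
  constructor
  · intro h; linear_combination (-2 : ℂ) * h
  · intro h; linear_combination (-1 / 2 : ℂ) * h

lemma fixed_point_equations_iff {p₁ p₂ φ₁ φ₂ z : ℂ} {T₁ T₂ : ℂ → ℂ} {lam ν a s : ℝ}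
    (hT₁ : T₁ z = p₁ + φ₁ * (z - p₁)) (hT₂ : T₂ z = p₂ + φ₂ * (z - p₂))
    (hν : ν = a / (2 * (1 - lam))) (hz : T₁ z ≠ T₂ z) :
    ((T₁ z + T₂ z) / 2 + (s : ℂ) * ((a : ℂ) / 2) * ((T₂ z - T₁ z) / (‖T₂ z - T₁ z‖ : ℂ)) = z ∧
        lam * s + ‖T₂ z - T₁ z‖ / 2 = s) ↔
      ((1 - ν) * (1 - φ₁) + (1 + ν) * (1 - φ₂)) * z =
          (1 - ν) * (1 - φ₁) * p₁ + (1 + ν) * (1 - φ₂) * p₂ ∧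
        ‖T₂ z - T₁ z‖ = 2 * (1 - lam) * s := by
  have hd : T₂ z - T₁ z ≠ 0 := sub_ne_zero.2 hz.symm
  constructor
  · rintro ⟨hm₁, hm₂⟩
    have hnorm : ‖T₂ z - T₁ z‖ = 2 * (1 - lam) * s := by linarith
    rw [ofReal_mul_mul_div_norm_of_norm_eq _ hd hnorm, ← hν,
      add_div_two_add_mul_sub_eq_self_iff hT₁ hT₂] at hm₁
    exact ⟨hm₁, hnorm⟩
  · rintro ⟨hlin, hnorm⟩
    rw [ofReal_mul_mul_div_norm_of_norm_eq _ hd hnorm, ← hν,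
      add_div_two_add_mul_sub_eq_self_iff hT₁ hT₂]
    exact ⟨hlin, by linarith⟩

lemma mul_sub_eq_of_mul_eq {p₁ p₂ φ₁ φ₂ ν z : ℂ} {T₁ T₂ : ℂ → ℂ}
    (hT₁ : T₁ z = p₁ + φ₁ * (z - p₁)) (hT₂ : T₂ z = p₂ + φ₂ * (z - p₂))
    (hz : ((1 - ν) * (1 - φ₁) + (1 + ν) * (1 - φ₂)) * z =
      (1 - ν) * (1 - φ₁) * p₁ + (1 + ν) * (1 - φ₂) * p₂) :
    ((1 - ν) * (1 - φ₁) + (1 + ν) * (1 - φ₂)) * (T₂ z - T₁ z) =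
      2 * ((1 - φ₁) * (1 - φ₂) * (p₂ - p₁)) := by
  rw [hT₁, hT₂]
  linear_combination (φ₂ - φ₁) * hz

lemma one_sub_ne_zero_of_norm_lt_one {φ : ℂ} (h : ‖φ‖ < 1) : 1 - φ ≠ 0 :=
  sub_ne_zero.2 fun h1 => by simp [← h1] at h

/-- the bifractal circumcircle (c,r) given by the explicit
formulas is the unique fixed point of the map M. -/
theorem stmt15 (p₁ p₂ φ₁ φ₂ : ℂ)
    (h₁ : ‖φ₁‖ ∈ Set.Ioo (0:ℝ) 1) (h₂ : ‖φ₂‖ ∈ Set.Ioo (0:ℝ) 1)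
    (hp : p₁ ≠ p₂)
    (T₁ T₂ : ℂ → ℂ) (hT₁ : ∀ z, T₁ z = p₁ + φ₁ * (z - p₁))
    (hT₂ : ∀ z, T₂ z = p₂ + φ₂ * (z - p₂))
    (lam ν : ℝ) (hlam : lam = (‖φ₁‖ + ‖φ₂‖) / 2)
    (hν : ν = (‖φ₂‖ - ‖φ₁‖) / (2 * (1 - lam)))
    (m₁ : ℂ → ℝ → ℂ) (m₂ : ℂ → ℝ → ℝ)
    (hm₁ : ∀ z s, m₁ z s = (T₁ z + T₂ z) / 2 +
      (s : ℂ) * ((‖φ₂‖ - ‖φ₁‖ : ℝ) / 2 : ℂ) *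
        ((T₂ z - T₁ z) / (‖T₂ z - T₁ z‖ : ℂ)))
    (hm₂ : ∀ z s, m₂ z s = lam * s + ‖T₂ z - T₁ z‖ / 2)
    (hden : ((1:ℂ) - ν) * (1 - φ₁) + ((1:ℂ) + ν) * (1 - φ₂) ≠ 0)
    (c : ℂ) (r : ℝ)
    (hc : c = (((1:ℂ) - ν) * (1 - φ₁) * p₁ + ((1:ℂ) + ν) * (1 - φ₂) * p₂) /
              (((1:ℂ) - ν) * (1 - φ₁) + ((1:ℂ) + ν) * (1 - φ₂)))
    (hr : r = ‖1 - φ₁‖ * ‖1 - φ₂‖ * ‖p₂ - p₁‖ /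
              ((1 - lam) *
                ‖((1:ℂ) - ν) * (1 - φ₁) + ((1:ℂ) + ν) * (1 - φ₂)‖)) :
    (T₁ c ≠ T₂ c ∧ m₁ c r = c ∧ m₂ c r = r) ∧
    ∀ (c' : ℂ) (r' : ℝ), T₁ c' ≠ T₂ c' → m₁ c' r' = c' → m₂ c' r' = r' →
      c' = c ∧ r' = r := by
  set D : ℂ := ((1:ℂ) - ν) * (1 - φ₁) + ((1:ℂ) + ν) * (1 - φ₂)
  set N : ℂ := ((1:ℂ) - ν) * (1 - φ₁) * p₁ + ((1:ℂ) + ν) * (1 - φ₂) * p₂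
  have hκ : 1 - lam ≠ 0 := by rw [hlam]; linarith [h₁.2, h₂.2]
  have hfix : ∀ z s, T₁ z ≠ T₂ z →
      (m₁ z s = z ∧ m₂ z s = s ↔ D * z = N ∧ ‖T₂ z - T₁ z‖ = 2 * (1 - lam) * s) := by
    intro z s hz
    rw [hm₁, hm₂]
    exact fixed_point_equations_iff (hT₁ z) (hT₂ z) hν hz
  have hDc : D * c = N := by rw [hc]; field_simp
  have hsub := mul_sub_eq_of_mul_eq (hT₁ c) (hT₂ c) hDc
  have hTc : T₁ c ≠ T₂ c := by
    intro h
    refine mul_ne_zero two_ne_zero (mul_ne_zero (mul_ne_zero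
      (one_sub_ne_zero_of_norm_lt_one h₁.2) (one_sub_ne_zero_of_norm_lt_one h₂.2))
      (sub_ne_zero.2 hp.symm)) ?_
    rw [← hsub, h, sub_self, mul_zero]
  have hnorm : ‖T₂ c - T₁ c‖ = 2 * (1 - lam) * r := by
    have := congrArg norm hsub
    simp only [norm_mul, Complex.norm_two] at this
    rw [hr]
    field_simp
    linear_combination this
  refine ⟨⟨hTc, (hfix c r hTc).2 ⟨hDc, hnorm⟩⟩, fun c' r' hTc' h₁ h₂ => ?_⟩
  obtain ⟨hDc', hnorm'⟩ := (hfix c' r' hTc').1 ⟨h₁, h₂⟩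
  obtain rfl : c' = c := mul_left_cancel₀ hden (hDc'.trans hDc.symm)
  exact ⟨rfl, mul_left_cancel₀ (mul_ne_zero two_ne_zero hκ) (hnorm'.symm.trans hnorm)⟩
end

section
/- Let F be the attractor of an IFS of contractions with factors λ_k ≤ λ_* < 1, let B(c,r) ⊇ F, and for each L let (c_L, r_L) be the minimum covering circle of the finite point set {T_w(c) : w ∈ {1,...,n}^L}. Then the bounding radius r_L + λ_*^L r of F satisfies r_L + λ_*^L r → r_F as L → ∞, where r_F is the radius of the minimum covering circle of F; in particular, for every ε > 0 there exists L such that r_L + λ_*^L r ≤ r_F + ε. -/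
/-- Composition T_w = T_{w₁} ∘ ⋯ ∘ T_{w_L} of IFS maps along a word w. -/
def applyWord {n : ℕ} (T : Fin n → ℂ → ℂ) : List (Fin n) → ℂ → ℂ :=
  fun w => w.foldr (fun k f => T k ∘ f) id

/-!
Every point of `F` is `T_w y` for some word `w` of length `L` and some `y ∈ F ⊆ B(c, r)`, and
conversely `T_w` maps `F` into itself. Since `T_w` is `λ_*^L`-Lipschitz, the level-`L` centre set
and `F` are within Hausdorff distance `λ_*^L r` of each other, so each of `r_L` and `r_F` exceeds
the other by at most `λ_*^L r`, and `λ_*^L r → 0`.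
-/

open Metric Filter Topology

section IteratedFunctionSystem

variable {n : ℕ} {T : Fin n → ℂ → ℂ}

@[simp]
lemma applyWord_nil (x : ℂ) : applyWord T [] x = x := rfl

lemma dist_applyWord_le {lam : Fin n → NNReal} {lamS : ℝ}
    (hT : ∀ k, LipschitzWith (lam k) (T k)) (hlam : ∀ k, (lam k : ℝ) ≤ lamS)
    (w : List (Fin n)) (x y : ℂ) :
    dist (applyWord T w x) (applyWord T w y) ≤ lamS ^ w.length * dist x y := by
  induction w with
  | nil => simp
  | cons k w ih =>
    calc dist (applyWord T (k :: w) x) (applyWord T (k :: w) y)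
        ≤ lam k * dist (applyWord T w x) (applyWord T w y) := (hT k).dist_le_mul _ _
      _ ≤ lamS * (lamS ^ w.length * dist x y) :=
          mul_le_mul (hlam k) ih dist_nonneg ((lam k).coe_nonneg.trans (hlam k))
      _ = lamS ^ (k :: w).length * dist x y := by rw [List.length_cons, pow_succ]; ring

lemma mapsTo_applyWord {F : Set ℂ} (hF : ∀ k, Set.MapsTo (T k) F F) (w : List (Fin n)) :
    Set.MapsTo (applyWord T w) F F := by
  induction w with
  | nil => exact Set.mapsTo_id F
  | cons k w ih => exact (hF k).comp ih

lemma exists_applyWord_eq_of_subset_iUnion_image {F : Set ℂ} (hF : F ⊆ ⋃ k, T k '' F)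
    (L : ℕ) {x : ℂ} (hx : x ∈ F) :
    ∃ w : List (Fin n), w.length = L ∧ ∃ y ∈ F, applyWord T w y = x := by
  induction L generalizing x with
  | zero => exact ⟨[], rfl, x, hx, rfl⟩
  | succ L ih =>
    obtain ⟨k, z, hz, rfl⟩ := Set.mem_iUnion.1 (hF hx)
    obtain ⟨w, rfl, y, hy, rfl⟩ := ih hz
    exact ⟨k :: w, rfl, y, hy, rfl⟩

variable {lam : Fin n → NNReal} {lamS : ℝ} {F : Set ℂ} {c : ℂ} {r : ℝ}

lemma dist_applyWord_le_of_mem (hT : ∀ k, LipschitzWith (lam k) (T k))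
    (hlam : ∀ k, (lam k : ℝ) ≤ lamS) (hlamS : 0 ≤ lamS) (hB : F ⊆ closedBall c r)
    {w : List (Fin n)} {y : ℂ} (hy : y ∈ F) :
    dist (applyWord T w y) (applyWord T w c) ≤ lamS ^ w.length * r :=
  (dist_applyWord_le hT hlam w y c).trans <|
    mul_le_mul_of_nonneg_left (hB hy) (pow_nonneg hlamS _)

lemma exists_mem_dist_applyWord_le (hT : ∀ k, LipschitzWith (lam k) (T k))
    (hlam : ∀ k, (lam k : ℝ) ≤ lamS) (hlamS : 0 ≤ lamS) (hFne : F.Nonempty)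
    (hFfix : (⋃ k, T k '' F) = F) (hB : F ⊆ closedBall c r) (w : List (Fin n)) :
    ∃ y ∈ F, dist (applyWord T w c) y ≤ lamS ^ w.length * r := by
  obtain ⟨x, hx⟩ := hFne
  have hF : ∀ k, Set.MapsTo (T k) F F := fun k y hy =>
    hFfix ▸ Set.mem_iUnion_of_mem k (Set.mem_image_of_mem (T k) hy)
  exact ⟨_, mapsTo_applyWord hF w hx, dist_comm (applyWord T w c) _ ▸
    dist_applyWord_le_of_mem hT hlam hlamS hB hx⟩

lemma exists_dist_applyWord_le (hT : ∀ k, LipschitzWith (lam k) (T k))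
    (hlam : ∀ k, (lam k : ℝ) ≤ lamS) (hlamS : 0 ≤ lamS) (hFfix : (⋃ k, T k '' F) = F)
    (hB : F ⊆ closedBall c r) (L : ℕ) {x : ℂ} (hx : x ∈ F) :
    ∃ w : List (Fin n), w.length = L ∧ dist x (applyWord T w c) ≤ lamS ^ L * r := by
  obtain ⟨w, rfl, y, hy, rfl⟩ := exists_applyWord_eq_of_subset_iUnion_image hFfix.ge L hx
  exact ⟨w, rfl, dist_applyWord_le_of_mem hT hlam hlamS hB hy⟩

end IteratedFunctionSystem

lemma mem_closedBall_add_of_dist_le {α : Type*} [PseudoMetricSpace α] {x p c : α} {ρ δ : ℝ}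
    (hxp : dist x p ≤ δ) (hp : p ∈ closedBall c ρ) : x ∈ closedBall c (ρ + δ) :=
  mem_closedBall.2 <| by linarith [dist_triangle x p c, mem_closedBall.1 hp]

lemma tendsto_add_of_le_add_of_le_add {ι : Type*} {l : Filter ι} {u a : ι → ℝ} {b : ℝ}
    (ha : Tendsto a l (𝓝 0)) (hlower : ∀ i, b ≤ u i + a i)
    (hupper : ∀ i, u i ≤ b + a i) :
    Tendsto (fun i => u i + a i) l (𝓝 b) := by
  have h2a : Tendsto (fun i => b + a i + a i) l (𝓝 b) := by
    simpa using (tendsto_const_nhds.add ha).add ha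
  exact tendsto_of_tendsto_of_tendsto_of_le_of_le tendsto_const_nhds h2a hlower
    fun i => by linarith [hupper i]

theorem stmt18_general (n : ℕ) (hn : 0 < n) (T : Fin n → ℂ → ℂ)
    (lam : Fin n → NNReal) (lamS : ℝ)
    (hTk : ∀ k, LipschitzWith (lam k) (T k))
    (hlam : ∀ k, (lam k : ℝ) ≤ lamS) (hlamS : lamS < 1)
    (F : Set ℂ) (hFne : F.Nonempty)
    (hFfix : (⋃ k, T k '' F) = F)
    (c : ℂ) (r : ℝ) (hB : F ⊆ Metric.closedBall c r)
    (cL : ℕ → ℂ) (rL : ℕ → ℝ)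
    (hcov : ∀ L, ∀ w : List (Fin n), w.length = L →
        applyWord T w c ∈ Metric.closedBall (cL L) (rL L))
    (hmin : ∀ L (c' : ℂ) (r' : ℝ),
        (∀ w : List (Fin n), w.length = L →
          applyWord T w c ∈ Metric.closedBall c' r') → rL L ≤ r')
    (cF : ℂ) (rF : ℝ) (hFcov : F ⊆ Metric.closedBall cF rF)
    (hFmin : ∀ (c' : ℂ) (r' : ℝ), F ⊆ Metric.closedBall c' r' → rF ≤ r') :
    Filter.Tendsto (fun L => rL L + lamS ^ L * r) Filter.atTop (nhds rF) ∧
    ∀ ε > (0:ℝ), ∃ L, rL L + lamS ^ L * r ≤ rF + ε := by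
  have hlamS0 : 0 ≤ lamS := (lam ⟨0, hn⟩).coe_nonneg.trans (hlam _)
  have hdecay : Tendsto (fun L => lamS ^ L * r) atTop (𝓝 0) := by
    simpa using (tendsto_pow_atTop_nhds_zero_of_lt_one hlamS0 hlamS).mul_const r
  have hupper (L : ℕ) : rL L ≤ rF + lamS ^ L * r := hmin L cF _ fun w hw => by
    obtain ⟨y, hy, hdist⟩ := exists_mem_dist_applyWord_le hTk hlam hlamS0 hFne hFfix hB w
    exact mem_closedBall_add_of_dist_le (hw ▸ hdist) (hFcov hy)
  have hlower (L : ℕ) : rF ≤ rL L + lamS ^ L * r := hFmin (cL L) _ fun x hx => by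
    obtain ⟨w, hw, hdist⟩ := exists_dist_applyWord_le hTk hlam hlamS0 hFfix hB L hx
    exact mem_closedBall_add_of_dist_le hdist (hcov L w hw)
  have htend := tendsto_add_of_le_add_of_le_add hdecay hlower hupper
  refine ⟨htend, fun ε hε => ?_⟩
  exact (htend.eventually (ge_mem_nhds (lt_add_of_pos_right rF hε))).exists

/-- the improved bounding radii r_L + λ_*^L r obtained from the
minimum covering circles of the level-L center sets converge to the minimum
covering radius r_F of the attractor F. -/
theorem stmt18 (n : ℕ) (hn : 0 < n) (T : Fin n → ℂ → ℂ)
    (lam : Fin n → NNReal) (lamS : ℝ)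
    (hTk : ∀ k, LipschitzWith (lam k) (T k))
    (hlam : ∀ k, (lam k : ℝ) ≤ lamS) (hlamS : lamS < 1)
    (F : Set ℂ) (hFne : F.Nonempty) (hFc : IsCompact F)
    (hFfix : (⋃ k, T k '' F) = F)
    (c : ℂ) (r : ℝ) (hB : F ⊆ Metric.closedBall c r)
    (cL : ℕ → ℂ) (rL : ℕ → ℝ)
    (hcov : ∀ L, ∀ w : List (Fin n), w.length = L →
        applyWord T w c ∈ Metric.closedBall (cL L) (rL L))
    (hmin : ∀ L (c' : ℂ) (r' : ℝ),
        (∀ w : List (Fin n), w.length = L →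
          applyWord T w c ∈ Metric.closedBall c' r') → rL L ≤ r')
    (cF : ℂ) (rF : ℝ) (hFcov : F ⊆ Metric.closedBall cF rF)
    (hFmin : ∀ (c' : ℂ) (r' : ℝ), F ⊆ Metric.closedBall c' r' → rF ≤ r') :
    Filter.Tendsto (fun L => rL L + lamS ^ L * r) Filter.atTop (nhds rF) ∧
    ∀ ε > (0:ℝ), ∃ L, rL L + lamS ^ L * r ≤ rF + ε :=
  stmt18_general n hn T lam lamS hTk hlam hlamS F hFne hFfix c r hB cL rL hcov hmin cF rF hFcov
    hFmin
end
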